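/- arXiv:2310.09569 — 8 statements merged into one kernel-verified Lean document; each statement's English description precedes it below -/
import Mathlib

section
/- Let r and s be coprime integers with 1 < r < s. Then π₂ = π₁ π₄^r, i.e. for every i in {1,...,s} one has π₂(i) = π₁(π₄^r(i)). -/
/-!
`π₄ ^ r` shifts `i` cyclically by `r`. For `i ≤ s - r` it lands at `i + r > r`, which `π₁` fixes;
otherwise it lands at `i + r - s ≤ r`, which `π₁` reflects to `s + 1 - i`. Both agree with `π₂`.
-/

namespace Equiv.Perm

variable {s : ℕ} {σ : Perm ℕ}

theorem pow_apply_of_cyclicShift (hsucc : ∀ i : ℕ, 1 ≤ i → i ≤ s - 1 → σ i = i + 1)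
    (hlast : σ s = 1) {k : ℕ} (hk : k ≤ s) {i : ℕ} (hi : 1 ≤ i) (his : i ≤ s) :
    (σ ^ k) i = if i + k ≤ s then i + k else i + k - s := by
  induction k with
  | zero => simp [his]
  | succ k ih =>
    rw [pow_succ', mul_apply, ih (by omega)]
    split_ifs with hk₁ hk₂ hk₂
    · rw [hsucc _ (by omega) (by omega)]; omega
    · rw [show i + k = s by omega, hlast]; omega
    · omega
    · rw [hsucc _ (by omega) (by omega)]; omega

end Equiv.Perm

theorem stmt_1_general
    (r s : ℕ) (hrs : r < s)
    (π₁ : Equiv.Perm ℕ)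
    (hπ₁₁ : ∀ i : ℕ, 1 ≤ i → i ≤ r → π₁ i = r + 1 - i)
    (hπ₁₂ : ∀ i : ℕ, r + 1 ≤ i → i ≤ s → π₁ i = i)
    (π₂ : Equiv.Perm ℕ)
    (hπ₂₁ : ∀ i : ℕ, 1 ≤ i → i ≤ s - r → π₂ i = r + i)
    (hπ₂₂ : ∀ i : ℕ, s - r + 1 ≤ i → i ≤ s → π₂ i = s + 1 - i)
    (π₄ : Equiv.Perm ℕ)
    (hπ₄₁ : ∀ i : ℕ, 1 ≤ i → i ≤ s - 1 → π₄ i = i + 1)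
    (hπ₄₂ : π₄ s = 1) :
    ∀ i : ℕ, 1 ≤ i → i ≤ s → π₂ i = π₁ ((π₄ ^ r) i) := by
  intro i hi his
  rw [Equiv.Perm.pow_apply_of_cyclicShift hπ₄₁ hπ₄₂ hrs.le hi his]
  split_ifs with h
  · rw [hπ₁₂ _ (by omega) h, hπ₂₁ i hi (by omega)]
    omega
  · rw [hπ₁₁ _ (by omega) (by omega), hπ₂₂ i (by omega) his]
    omega

theorem stmt_1
    (r s : ℕ) (hr : 1 < r) (hrs : r < s) (hco : Nat.Coprime r s)
    (π₁ : Equiv.Perm ℕ)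
    (hπ₁₁ : ∀ i : ℕ, 1 ≤ i → i ≤ r → π₁ i = r + 1 - i)
    (hπ₁₂ : ∀ i : ℕ, r + 1 ≤ i → i ≤ s → π₁ i = i)
    (hπ₁₃ : ∀ i : ℕ, i = 0 ∨ s < i → π₁ i = i)
    (π₂ : Equiv.Perm ℕ)
    (hπ₂₁ : ∀ i : ℕ, 1 ≤ i → i ≤ s - r → π₂ i = r + i)
    (hπ₂₂ : ∀ i : ℕ, s - r + 1 ≤ i → i ≤ s → π₂ i = s + 1 - i)
    (hπ₂₃ : ∀ i : ℕ, i = 0 ∨ s < i → π₂ i = i)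
    (π₄ : Equiv.Perm ℕ)
    (hπ₄₁ : ∀ i : ℕ, 1 ≤ i → i ≤ s - 1 → π₄ i = i + 1)
    (hπ₄₂ : π₄ s = 1)
    (hπ₄₃ : ∀ i : ℕ, i = 0 ∨ s < i → π₄ i = i) :
    ∀ i : ℕ, 1 ≤ i → i ≤ s → π₂ i = π₁ ((π₄ ^ r) i) :=
  stmt_1_general r s hrs π₁ hπ₁₁ hπ₁₂ π₂ hπ₂₁ hπ₂₂ π₄ hπ₄₁ hπ₄₂
end

section
/- Let r and s be coprime integers with 1 < r < s. Then the inversion set Inv(π₄ π₃⁻¹) contains the inversion set Inv(π₃⁻¹). -/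
/-!
Since `r * s ≡ 0 [MOD s]`, `π₃` fixes `s`, so `π₃⁻¹` fixes `s` and permutes `{1, ..., s - 1}`.
An inversion `(i, j)` of `π₃⁻¹` therefore has both values `π₃⁻¹ j < π₃⁻¹ i` in `{1, ..., s - 1}`,
where `π₄` is the increasing map `x ↦ x + 1`, so the inversion survives composition with `π₄`.
-/

/-- The inversion set of a permutation of `{1, ..., s}`:
pairs `(i, j)` with `1 ≤ i < j ≤ s` and `π i > π j`. -/
def invSet (s : ℕ) (π : Equiv.Perm ℕ) : Set (ℕ × ℕ) :=
  {p : ℕ × ℕ | 1 ≤ p.1 ∧ p.1 < p.2 ∧ p.2 ≤ s ∧ π p.2 < π p.1}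

theorem Equiv.Perm.mapsTo_inv_of_forall_notMem {α : Type*} {σ : Equiv.Perm α} {S : Set α}
    (h : ∀ x ∉ S, σ x = x) : Set.MapsTo ⇑σ⁻¹ S S := by
  intro y hy
  by_contra hn
  have hfix := h _ hn
  simp only [Equiv.Perm.coe_inv, Equiv.apply_symm_apply] at hfix
  exact hn (hfix ▸ hy)

theorem Nat.eq_of_mod_eq_zero_of_mem_Icc {x s : ℕ} (hx : x ∈ Set.Icc 1 s) (h : x % s = 0) :
    x = s :=
  le_antisymm hx.2 (Nat.le_of_dvd hx.1 (Nat.dvd_of_mod_eq_zero h))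

theorem invSet_subset_invSet_mul {s : ℕ} {σ τ : Equiv.Perm ℕ}
    (hσ : Set.MapsTo σ (Set.Icc 1 s) (Set.Icc 1 s)) (hσs : σ s = s)
    (hτ : StrictMonoOn τ (Set.Icc 1 (s - 1))) :
    invSet s σ ⊆ invSet s (τ * σ) := by
  rintro ⟨i, j⟩ ⟨hi, hij, hjs, hinv : σ j < σ i⟩
  refine ⟨hi, hij, hjs, show τ (σ j) < τ (σ i) from ?_⟩
  obtain ⟨hσi1, hσis⟩ := hσ (show i ∈ Set.Icc 1 s from ⟨hi, by omega⟩)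
  obtain ⟨hσj1, -⟩ := hσ (show j ∈ Set.Icc 1 s from ⟨by omega, hjs⟩)
  have hσi : σ i ≠ s := fun h => by
    have : i = s := σ.injective (h.trans hσs.symm)
    omega
  exact hτ ⟨hσj1, by omega⟩ ⟨hσi1, by omega⟩ hinv

theorem stmt_3_general
    (r s : ℕ)
    (π₃ : Equiv.Perm ℕ)
    (hπ₃₁ : ∀ i : ℕ, 1 ≤ i → i ≤ s → 1 ≤ π₃ i ∧ π₃ i ≤ s ∧ π₃ i % s = (r * i) % s)
    (hπ₃₂ : ∀ i : ℕ, i = 0 ∨ s < i → π₃ i = i)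
    (π₄ : Equiv.Perm ℕ)
    (hπ₄₁ : ∀ i : ℕ, 1 ≤ i → i ≤ s - 1 → π₄ i = i + 1) :
    invSet s π₃⁻¹ ⊆ invSet s (π₄ * π₃⁻¹) := by
  intro p hp
  have hs : 1 ≤ s := hp.1.trans (hp.2.1.le.trans hp.2.2.1)
  have hπ₃s : π₃ s = s := by
    obtain ⟨h1, h2, hmod⟩ := hπ₃₁ s hs le_rfl
    exact Nat.eq_of_mod_eq_zero_of_mem_Icc ⟨h1, h2⟩ (by rw [hmod, Nat.mul_mod_left])
  have hmaps : Set.MapsTo ⇑π₃⁻¹ (Set.Icc 1 s) (Set.Icc 1 s) :=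
    Equiv.Perm.mapsTo_inv_of_forall_notMem fun x hx => hπ₃₂ x <| by
      simp only [Set.mem_Icc, not_and_or, not_le] at hx
      omega
  have hmono : StrictMonoOn π₄ (Set.Icc 1 (s - 1)) := fun a ha b hb hab => by
    rw [hπ₄₁ a ha.1 ha.2, hπ₄₁ b hb.1 hb.2]
    omega
  exact invSet_subset_invSet_mul hmaps (Equiv.Perm.inv_eq_iff_eq.mpr hπ₃s.symm) hmono hp

theorem stmt_3
    (r s : ℕ) (hr : 1 < r) (hrs : r < s) (hco : Nat.Coprime r s)
    (π₃ : Equiv.Perm ℕ)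
    (hπ₃₁ : ∀ i : ℕ, 1 ≤ i → i ≤ s → 1 ≤ π₃ i ∧ π₃ i ≤ s ∧ π₃ i % s = (r * i) % s)
    (hπ₃₂ : ∀ i : ℕ, i = 0 ∨ s < i → π₃ i = i)
    (π₄ : Equiv.Perm ℕ)
    (hπ₄₁ : ∀ i : ℕ, 1 ≤ i → i ≤ s - 1 → π₄ i = i + 1)
    (hπ₄₂ : π₄ s = 1)
    (hπ₄₃ : ∀ i : ℕ, i = 0 ∨ s < i → π₄ i = i) :
    invSet s π₃⁻¹ ⊆ invSet s (π₄ * π₃⁻¹) :=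
  stmt_3_general r s π₃ hπ₃₁ hπ₃₂ π₄ hπ₄₁
end

section
/- Let r and s be coprime integers with 1 < r < s. Then the inversion set Inv(π₅⁻¹ π₂) contains the inversion set Inv(π₃⁻¹ π₄^r). -/
open Finset Equiv.Perm

theorem Finset.card_filter_le_lt_card_filter_le {α β : Type*} [LinearOrder β]
    {S : Finset α} {g : α → β} {x y : α} (hx : x ∈ S) (hyx : g y < g x) :
    #{z ∈ S | g z ≤ g y} < #{z ∈ S | g z ≤ g x} :=
  card_lt_card ⟨monotone_filter_right S fun _ _ h => h.trans hyx.le,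
    fun hsub => hyx.not_ge (mem_filter.mp (hsub (mem_filter.mpr ⟨hx, le_rfl⟩))).2⟩

theorem Equiv.Perm.pow_apply_eq_add {s : ℕ} {π : Equiv.Perm ℕ}
    (hπ : ∀ i, 1 ≤ i → i ≤ s - 1 → π i = i + 1) (k : ℕ) {i : ℕ} (hi : 1 ≤ i) (hik : i + k ≤ s) :
    (π ^ k) i = i + k := by
  induction k generalizing i with
  | zero => rfl
  | succ k ih =>
    rw [pow_succ, mul_apply, hπ i hi (by omega), ih (by omega) (by omega)]
    omega

theorem stmt_6_general
    (r s : ℕ)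
    (π₂ : Equiv.Perm ℕ)
    (hπ₂₁ : ∀ i : ℕ, 1 ≤ i → i ≤ s - r → π₂ i = r + i)
    (hπ₂₂ : ∀ i : ℕ, s - r + 1 ≤ i → i ≤ s → π₂ i = s + 1 - i)
    (π₃ : Equiv.Perm ℕ)
    (π₄ : Equiv.Perm ℕ)
    (hπ₄₁ : ∀ i : ℕ, 1 ≤ i → i ≤ s - 1 → π₄ i = i + 1)
    (π₅ : Equiv.Perm ℕ)
    (hπ₅₁ : ∀ i : ℕ, 1 ≤ i → i ≤ r → π₅⁻¹ i = i)
    (hπ₅₂ : ∀ i : ℕ, r + 1 ≤ i → i ≤ s →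
      π₅⁻¹ i = r + ((Finset.Icc (r + 1) s).filter (fun j => π₃⁻¹ j ≤ π₃⁻¹ i)).card) :
    invSet s (π₃⁻¹ * π₄ ^ r) ⊆ invSet s (π₅⁻¹ * π₂) := by
  have hσ {i : ℕ} (hi : 1 ≤ i) (his : i ≤ s - r) : (π₃⁻¹ * π₄ ^ r) i = π₃⁻¹ (r + i) := by
    rw [mul_apply, pow_apply_eq_add hπ₄₁ r hi (by omega), add_comm]
  have hτ_low {i : ℕ} (hi : 1 ≤ i) (his : i ≤ s - r) :
      (π₅⁻¹ * π₂) i = r + #{j ∈ Icc (r + 1) s | π₃⁻¹ j ≤ π₃⁻¹ (r + i)} := by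
    rw [mul_apply, hπ₂₁ i hi his, hπ₅₂ (r + i) (by omega) (by omega)]
  have hτ_high {i : ℕ} (hi : s - r < i) (his : i ≤ s) : (π₅⁻¹ * π₂) i = s + 1 - i := by
    rw [mul_apply, hπ₂₂ i hi his, hπ₅₁ (s + 1 - i) (by omega) (by omega)]
  rintro ⟨i, j⟩ ⟨hi, hij, hjs, hσij⟩
  refine ⟨hi, hij, hjs, ?_⟩
  dsimp only at *
  rcases le_or_gt j (s - r) with hj | hj
  · rw [hσ hi (by omega), hσ (by omega) hj] at hσij
    rw [hτ_low hi (by omega), hτ_low (by omega) hj]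
    exact Nat.add_lt_add_left
      (card_filter_le_lt_card_filter_le (mem_Icc.mpr ⟨by omega, by omega⟩) hσij) r
  rw [hτ_high hj hjs]
  rcases le_or_gt i (s - r) with hi' | hi'
  · have hrank_pos : 0 < #{k ∈ Icc (r + 1) s | π₃⁻¹ k ≤ π₃⁻¹ (r + i)} :=
      card_pos.mpr ⟨r + i, mem_filter.mpr ⟨mem_Icc.mpr ⟨by omega, by omega⟩, le_rfl⟩⟩
    rw [hτ_low hi hi']
    omega
  · rw [hτ_high hi' (by omega)]
    omega

theorem stmt_6
    (r s : ℕ) (hr : 1 < r) (hrs : r < s) (hco : Nat.Coprime r s)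
    (π₂ : Equiv.Perm ℕ)
    (hπ₂₁ : ∀ i : ℕ, 1 ≤ i → i ≤ s - r → π₂ i = r + i)
    (hπ₂₂ : ∀ i : ℕ, s - r + 1 ≤ i → i ≤ s → π₂ i = s + 1 - i)
    (hπ₂₃ : ∀ i : ℕ, i = 0 ∨ s < i → π₂ i = i)
    (π₃ : Equiv.Perm ℕ)
    (hπ₃₁ : ∀ i : ℕ, 1 ≤ i → i ≤ s → 1 ≤ π₃ i ∧ π₃ i ≤ s ∧ π₃ i % s = (r * i) % s)
    (hπ₃₂ : ∀ i : ℕ, i = 0 ∨ s < i → π₃ i = i)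
    (π₄ : Equiv.Perm ℕ)
    (hπ₄₁ : ∀ i : ℕ, 1 ≤ i → i ≤ s - 1 → π₄ i = i + 1)
    (hπ₄₂ : π₄ s = 1)
    (hπ₄₃ : ∀ i : ℕ, i = 0 ∨ s < i → π₄ i = i)
    (π₅ : Equiv.Perm ℕ)
    (hπ₅₁ : ∀ i : ℕ, 1 ≤ i → i ≤ r → π₅⁻¹ i = i)
    (hπ₅₂ : ∀ i : ℕ, r + 1 ≤ i → i ≤ s →
      π₅⁻¹ i = r + ((Finset.Icc (r + 1) s).filter (fun j => π₃⁻¹ j ≤ π₃⁻¹ i)).card)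
    (hπ₅₃ : ∀ i : ℕ, i = 0 ∨ s < i → π₅ i = i) :
    invSet s (π₃⁻¹ * π₄ ^ r) ⊆ invSet s (π₅⁻¹ * π₂) :=
  stmt_6_general r s π₂ hπ₂₁ hπ₂₂ π₃ π₄ hπ₄₁ π₅ hπ₅₁ hπ₅₂
end

section
/- Let r and s be coprime integers with 1 < r < s. Then the inversion set Inv(π₃⁻¹) contains the inversion set Inv(π₅⁻¹). -/
open Finset

theorem invSet_subset_invSet {s : ℕ} {σ τ : Equiv.Perm ℕ}
    (h : ∀ i j, 1 ≤ i → i < j → j ≤ s → τ i ≤ τ j → σ i ≤ σ j) :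
    invSet s σ ⊆ invSet s τ := by
  rintro ⟨i, j⟩ ⟨hi, hij, hjs, hσ⟩
  exact ⟨hi, hij, hjs, lt_of_not_ge fun hτ => (h i j hi hij hjs hτ).not_gt hσ⟩

theorem card_filter_apply_le_mono {α : Type*} (S : Finset α) (τ : α → ℕ) {i j : α}
    (hτ : τ i ≤ τ j) :
    #(S.filter fun k => τ k ≤ τ i) ≤ #(S.filter fun k => τ k ≤ τ j) :=
  card_le_card (monotone_filter_right S fun _ _ hk => hk.trans hτ)

theorem card_filter_apply_le_pos {α : Type*} {S : Finset α} (τ : α → ℕ) {i : α} (hi : i ∈ S) :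
    0 < #(S.filter fun k => τ k ≤ τ i) :=
  card_pos.mpr ⟨i, mem_filter.mpr ⟨hi, le_rfl⟩⟩

theorem le_of_fix_then_rank {r s : ℕ} {σ τ : ℕ → ℕ}
    (hfix : ∀ i, 1 ≤ i → i ≤ r → σ i = i)
    (hrank : ∀ i, r + 1 ≤ i → i ≤ s → σ i = r + #((Icc (r + 1) s).filter fun j => τ j ≤ τ i))
    {i j : ℕ} (hi : 1 ≤ i) (hij : i < j) (hjs : j ≤ s) (hτ : τ i ≤ τ j) :
    σ i ≤ σ j := by
  rcases le_or_gt j r with hjr | hrj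
  · rw [hfix i hi (by omega), hfix j (by omega) hjr]
    exact hij.le
  rcases le_or_gt i r with hir | hri
  · have hpos := card_filter_apply_le_pos τ (mem_Icc.mpr ⟨hrj, hjs⟩)
    rw [hfix i hi hir, hrank j hrj hjs]
    omega
  · rw [hrank i hri (by omega), hrank j hrj hjs]
    exact Nat.add_le_add_left (card_filter_apply_le_mono _ τ hτ) r

theorem stmt_7_general
    (r s : ℕ)
    (π₃ : Equiv.Perm ℕ)
    (π₅ : Equiv.Perm ℕ)
    (hπ₅₁ : ∀ i : ℕ, 1 ≤ i → i ≤ r → π₅⁻¹ i = i)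
    (hπ₅₂ : ∀ i : ℕ, r + 1 ≤ i → i ≤ s →
      π₅⁻¹ i = r + ((Finset.Icc (r + 1) s).filter (fun j => π₃⁻¹ j ≤ π₃⁻¹ i)).card) :
    invSet s π₅⁻¹ ⊆ invSet s π₃⁻¹ :=
  invSet_subset_invSet fun _ _ hi hij hjs => le_of_fix_then_rank hπ₅₁ hπ₅₂ hi hij hjs

theorem stmt_7
    (r s : ℕ) (hr : 1 < r) (hrs : r < s) (hco : Nat.Coprime r s)
    (π₃ : Equiv.Perm ℕ)
    (hπ₃₁ : ∀ i : ℕ, 1 ≤ i → i ≤ s → 1 ≤ π₃ i ∧ π₃ i ≤ s ∧ π₃ i % s = (r * i) % s)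
    (hπ₃₂ : ∀ i : ℕ, i = 0 ∨ s < i → π₃ i = i)
    (π₅ : Equiv.Perm ℕ)
    (hπ₅₁ : ∀ i : ℕ, 1 ≤ i → i ≤ r → π₅⁻¹ i = i)
    (hπ₅₂ : ∀ i : ℕ, r + 1 ≤ i → i ≤ s →
      π₅⁻¹ i = r + ((Finset.Icc (r + 1) s).filter (fun j => π₃⁻¹ j ≤ π₃⁻¹ i)).card)
    (hπ₅₃ : ∀ i : ℕ, i = 0 ∨ s < i → π₅ i = i) :
    invSet s π₅⁻¹ ⊆ invSet s π₃⁻¹ :=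
  stmt_7_general r s π₃ π₅ hπ₅₁ hπ₅₂
end

section
/- Let r and s be coprime integers with 1 < r < s. Then the inversion set Inv(π₅⁻¹ π₂) contains the inversion set Inv(π₂). -/
theorem apply_lt_apply_of_fixes_of_maps_above {r s : ℕ} (σ : ℕ → ℕ)
    (hfix : ∀ i : ℕ, 1 ≤ i → i ≤ r → σ i = i)
    (habove : ∀ i : ℕ, r + 1 ≤ i → i ≤ s → r + 1 ≤ σ i)
    {a b : ℕ} (hb : 1 ≤ b) (hbr : b ≤ r) (hba : b < a) (has : a ≤ s) :
    σ b < σ a := by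
  rw [hfix b hb hbr]
  by_cases har : a ≤ r
  · rwa [hfix a (by omega) har]
  · have := habove a (by omega) has
    omega

theorem bounds_of_mem_invSet_of_blockSwap {r s : ℕ} (π : Equiv.Perm ℕ)
    (hlow : ∀ i : ℕ, 1 ≤ i → i ≤ s - r → π i = r + i)
    (hhigh : ∀ i : ℕ, s - r + 1 ≤ i → i ≤ s → π i = s + 1 - i)
    {i j : ℕ} (hij : (i, j) ∈ invSet s π) :
    1 ≤ π j ∧ π j ≤ r ∧ π i ≤ s := by
  obtain ⟨hi, hij, hjs, hinv⟩ := hij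
  by_cases hj : j ≤ s - r
  · rw [hlow i hi (by omega), hlow j (by omega) hj] at hinv
    omega
  · rw [hhigh j (by omega) hjs]
    by_cases hi' : i ≤ s - r
    · rw [hlow i hi hi']
      omega
    · rw [hhigh i (by omega) (by omega)]
      omega

theorem le_add_card_filter {ι : Type*} (r : ℕ) (t : Finset ι) (p : ι → Prop) [DecidablePred p]
    {b : ι} (hb : b ∈ t) (hpb : p b) :
    r + 1 ≤ r + (t.filter p).card :=
  Nat.add_le_add_left (Finset.card_pos.2 ⟨b, Finset.mem_filter.2 ⟨hb, hpb⟩⟩) r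

theorem stmt_8_general
    (r s : ℕ)
    (π₂ : Equiv.Perm ℕ)
    (hπ₂₁ : ∀ i : ℕ, 1 ≤ i → i ≤ s - r → π₂ i = r + i)
    (hπ₂₂ : ∀ i : ℕ, s - r + 1 ≤ i → i ≤ s → π₂ i = s + 1 - i)
    (π₃ : Equiv.Perm ℕ)
    (π₅ : Equiv.Perm ℕ)
    (hπ₅₁ : ∀ i : ℕ, 1 ≤ i → i ≤ r → π₅⁻¹ i = i)
    (hπ₅₂ : ∀ i : ℕ, r + 1 ≤ i → i ≤ s →
      π₅⁻¹ i = r + ((Finset.Icc (r + 1) s).filter (fun j => π₃⁻¹ j ≤ π₃⁻¹ i)).card) :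
    invSet s π₂ ⊆ invSet s (π₅⁻¹ * π₂) := by
  have habove : ∀ i : ℕ, r + 1 ≤ i → i ≤ s → r + 1 ≤ π₅⁻¹ i := fun i hi his => by
    rw [hπ₅₂ i hi his]
    exact le_add_card_filter r _ _ (Finset.mem_Icc.2 ⟨hi, his⟩) le_rfl
  rintro ⟨i, j⟩ hij
  obtain ⟨hj, hjr, his⟩ := bounds_of_mem_invSet_of_blockSwap π₂ hπ₂₁ hπ₂₂ hij
  obtain ⟨hi, hlt, hjs, hinv⟩ := hij
  exact ⟨hi, hlt, hjs,
    apply_lt_apply_of_fixes_of_maps_above (⇑π₅⁻¹) hπ₅₁ habove hj hjr hinv his⟩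

theorem stmt_8
    (r s : ℕ) (hr : 1 < r) (hrs : r < s) (hco : Nat.Coprime r s)
    (π₂ : Equiv.Perm ℕ)
    (hπ₂₁ : ∀ i : ℕ, 1 ≤ i → i ≤ s - r → π₂ i = r + i)
    (hπ₂₂ : ∀ i : ℕ, s - r + 1 ≤ i → i ≤ s → π₂ i = s + 1 - i)
    (hπ₂₃ : ∀ i : ℕ, i = 0 ∨ s < i → π₂ i = i)
    (π₃ : Equiv.Perm ℕ)
    (hπ₃₁ : ∀ i : ℕ, 1 ≤ i → i ≤ s → 1 ≤ π₃ i ∧ π₃ i ≤ s ∧ π₃ i % s = (r * i) % s)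
    (hπ₃₂ : ∀ i : ℕ, i = 0 ∨ s < i → π₃ i = i)
    (π₅ : Equiv.Perm ℕ)
    (hπ₅₁ : ∀ i : ℕ, 1 ≤ i → i ≤ r → π₅⁻¹ i = i)
    (hπ₅₂ : ∀ i : ℕ, r + 1 ≤ i → i ≤ s →
      π₅⁻¹ i = r + ((Finset.Icc (r + 1) s).filter (fun j => π₃⁻¹ j ≤ π₃⁻¹ i)).card)
    (hπ₅₃ : ∀ i : ℕ, i = 0 ∨ s < i → π₅ i = i) :
    invSet s π₂ ⊆ invSet s (π₅⁻¹ * π₂) :=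
  stmt_8_general r s π₂ hπ₂₁ hπ₂₂ π₃ π₅ hπ₅₁ hπ₅₂
end

section
/- Let r and s be coprime integers with 1 < r < s. Then the inversion set Inv(π₅⁻¹ π₁) contains the inversion set Inv(π₁). -/
theorem invSet_subset_invSet_mul_of_strictMonoOn {s : ℕ} {π σ : Equiv.Perm ℕ} {S : Set ℕ}
    (hS : ∀ p ∈ invSet s π, π p.1 ∈ S ∧ π p.2 ∈ S) (hσ : StrictMonoOn σ S) :
    invSet s π ⊆ invSet s (σ * π) := by
  intro p hp
  obtain ⟨hS1, hS2⟩ := hS p hp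
  obtain ⟨h1, h2, h3, hlt⟩ := hp
  exact ⟨h1, h2, h3, hσ hS2 hS1 hlt⟩

theorem snd_le_of_mem_invSet_reversal {r s : ℕ} {π : Equiv.Perm ℕ}
    (hrev : ∀ i, 1 ≤ i → i ≤ r → π i = r + 1 - i) (hfix : ∀ i, r + 1 ≤ i → i ≤ s → π i = i)
    {p : ℕ × ℕ} (hp : p ∈ invSet s π) : p.2 ≤ r := by
  obtain ⟨h1, h2, h3, hlt⟩ := hp
  by_contra! hj
  rw [hfix p.2 hj h3] at hlt
  rcases le_or_gt p.1 r with hi | hi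
  · have := hrev p.1 h1 hi
    omega
  · have := hfix p.1 hi (by omega)
    omega

theorem stmt_9_general
    (r s : ℕ)
    (π₁ : Equiv.Perm ℕ)
    (hπ₁₁ : ∀ i : ℕ, 1 ≤ i → i ≤ r → π₁ i = r + 1 - i)
    (hπ₁₂ : ∀ i : ℕ, r + 1 ≤ i → i ≤ s → π₁ i = i)
    (π₅ : Equiv.Perm ℕ)
    (hπ₅₁ : ∀ i : ℕ, 1 ≤ i → i ≤ r → π₅⁻¹ i = i) :
    invSet s π₁ ⊆ invSet s (π₅⁻¹ * π₁) := by
  refine invSet_subset_invSet_mul_of_strictMonoOn (S := Set.Icc 1 r) ?_ ?_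
  · intro p hp
    have hj := snd_le_of_mem_invSet_reversal hπ₁₁ hπ₁₂ hp
    obtain ⟨h1, h2, -, -⟩ := hp
    rw [hπ₁₁ p.1 h1 (by omega), hπ₁₁ p.2 (by omega) hj]
    exact ⟨⟨by omega, by omega⟩, ⟨by omega, by omega⟩⟩
  · intro a ha b hb hab
    rwa [hπ₅₁ a ha.1 ha.2, hπ₅₁ b hb.1 hb.2]

theorem stmt_9
    (r s : ℕ) (hr : 1 < r) (hrs : r < s) (hco : Nat.Coprime r s)
    (π₁ : Equiv.Perm ℕ)
    (hπ₁₁ : ∀ i : ℕ, 1 ≤ i → i ≤ r → π₁ i = r + 1 - i)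
    (hπ₁₂ : ∀ i : ℕ, r + 1 ≤ i → i ≤ s → π₁ i = i)
    (hπ₁₃ : ∀ i : ℕ, i = 0 ∨ s < i → π₁ i = i)
    (π₃ : Equiv.Perm ℕ)
    (hπ₃₁ : ∀ i : ℕ, 1 ≤ i → i ≤ s → 1 ≤ π₃ i ∧ π₃ i ≤ s ∧ π₃ i % s = (r * i) % s)
    (hπ₃₂ : ∀ i : ℕ, i = 0 ∨ s < i → π₃ i = i)
    (π₅ : Equiv.Perm ℕ)
    (hπ₅₁ : ∀ i : ℕ, 1 ≤ i → i ≤ r → π₅⁻¹ i = i)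
    (hπ₅₂ : ∀ i : ℕ, r + 1 ≤ i → i ≤ s →
      π₅⁻¹ i = r + ((Finset.Icc (r + 1) s).filter (fun j => π₃⁻¹ j ≤ π₃⁻¹ i)).card)
    (hπ₅₃ : ∀ i : ℕ, i = 0 ∨ s < i → π₅ i = i) :
    invSet s π₁ ⊆ invSet s (π₅⁻¹ * π₁) :=
  stmt_9_general r s π₁ hπ₁₁ hπ₁₂ π₅ hπ₅₁
end

section
/- Let r and s be coprime integers with 1 < r < s. Then the inversion set Inv(π₁) contains the inversion set Inv(π₆⁻¹). -/
lemma snd_le_of_mem_invSet {r s : ℕ} {σ : Equiv.Perm ℕ}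
    (hmaps : ∀ i, 1 ≤ i → i ≤ r → σ i ≤ r) (hfix : ∀ i, r + 1 ≤ i → i ≤ s → σ i = i)
    {p : ℕ × ℕ} (hp : p ∈ invSet s σ) : p.2 ≤ r := by
  obtain ⟨h1, h12, h2s, hinv⟩ := hp
  by_contra! h2r
  have hfix₂ := hfix p.2 (by omega) h2s
  rcases le_or_gt p.1 r with h1r | h1r
  · have := hmaps p.1 h1 h1r
    omega
  · have := hfix p.1 (by omega) (by omega)
    omega

lemma mem_invSet_of_reverse {r s : ℕ} {π : Equiv.Perm ℕ}
    (hπ : ∀ i, 1 ≤ i → i ≤ r → π i = r + 1 - i)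
    {p : ℕ × ℕ} (h1 : 1 ≤ p.1) (h12 : p.1 < p.2) (h2r : p.2 ≤ r) (h2s : p.2 ≤ s) :
    p ∈ invSet s π := by
  refine ⟨h1, h12, h2s, ?_⟩
  rw [hπ p.1 h1 (by omega), hπ p.2 (by omega) h2r]
  omega

lemma card_filter_Icc_one_le (r : ℕ) (P : ℕ → Prop) [DecidablePred P] :
    ((Finset.Icc 1 r).filter P).card ≤ r :=
  (Finset.card_filter_le _ _).trans (by simp)

theorem stmt_15_general
    (r s : ℕ)
    (π₁ : Equiv.Perm ℕ)
    (hπ₁₁ : ∀ i : ℕ, 1 ≤ i → i ≤ r → π₁ i = r + 1 - i)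
    (π₃ : Equiv.Perm ℕ)
    (π₆ : Equiv.Perm ℕ)
    (hπ₆₁ : ∀ i : ℕ, 1 ≤ i → i ≤ r →
      π₆⁻¹ i = ((Finset.Icc 1 r).filter (fun j => π₃⁻¹ j ≤ π₃⁻¹ i)).card)
    (hπ₆₂ : ∀ i : ℕ, r + 1 ≤ i → i ≤ s → π₆⁻¹ i = i) :
    invSet s π₆⁻¹ ⊆ invSet s π₁ := by
  intro p hp
  have hmaps : ∀ i, 1 ≤ i → i ≤ r → π₆⁻¹ i ≤ r := fun i hi hir =>
    (hπ₆₁ i hi hir).trans_le (card_filter_Icc_one_le r _)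
  exact mem_invSet_of_reverse hπ₁₁ hp.1 hp.2.1 (snd_le_of_mem_invSet hmaps hπ₆₂ hp) hp.2.2.1

theorem stmt_15
    (r s : ℕ) (hr : 1 < r) (hrs : r < s) (hco : Nat.Coprime r s)
    (π₁ : Equiv.Perm ℕ)
    (hπ₁₁ : ∀ i : ℕ, 1 ≤ i → i ≤ r → π₁ i = r + 1 - i)
    (hπ₁₂ : ∀ i : ℕ, r + 1 ≤ i → i ≤ s → π₁ i = i)
    (hπ₁₃ : ∀ i : ℕ, i = 0 ∨ s < i → π₁ i = i)
    (π₃ : Equiv.Perm ℕ)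
    (hπ₃₁ : ∀ i : ℕ, 1 ≤ i → i ≤ s → 1 ≤ π₃ i ∧ π₃ i ≤ s ∧ π₃ i % s = (r * i) % s)
    (hπ₃₂ : ∀ i : ℕ, i = 0 ∨ s < i → π₃ i = i)
    (π₆ : Equiv.Perm ℕ)
    (hπ₆₁ : ∀ i : ℕ, 1 ≤ i → i ≤ r →
      π₆⁻¹ i = ((Finset.Icc 1 r).filter (fun j => π₃⁻¹ j ≤ π₃⁻¹ i)).card)
    (hπ₆₂ : ∀ i : ℕ, r + 1 ≤ i → i ≤ s → π₆⁻¹ i = i)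
    (hπ₆₃ : ∀ i : ℕ, i = 0 ∨ s < i → π₆ i = i) :
    invSet s π₆⁻¹ ⊆ invSet s π₁ :=
  stmt_15_general r s π₁ hπ₁₁ π₃ π₆ hπ₆₁ hπ₆₂
end

section
/- Let r and s be coprime integers with 1 < r < s. For every integer i with s - ⌊s/r⌋ + 1 ≤ i ≤ s, one has π₅⁻¹(s - r(s-i)) = i. -/
/-!
On the top block `s - ⌊s/r⌋ < x ≤ s`, multiplication by `r` modulo `s` is the affine map
`x ↦ s - r (s - x)`, whose values lie in `(r, s]` because `r ∤ s`. Hence `π₃⁻¹ (s - r (s - i)) = i`,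
and `π₅⁻¹ (s - r (s - i))` is `r` plus the number of `j ∈ (r, s]` among `π₃ 1, …, π₃ i`. These are
all `i` of them except `1, …, r`, whose preimages lie below the top block.
-/

open Finset

theorem Nat.eq_of_modEq_of_mem_Icc {s a b : ℕ} (h : a ≡ b [MOD s])
    (ha : a ∈ Icc 1 s) (hb : b ∈ Icc 1 s) : a = b := by
  rw [mem_Icc] at ha hb
  have hpred : a - 1 ≡ b - 1 [MOD s] :=
    Nat.ModEq.add_right_cancel' 1 (by rwa [Nat.sub_add_cancel ha.1, Nat.sub_add_cancel hb.1])
  have := hpred.eq_of_lt_of_lt (by omega) (by omega)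
  omega

theorem Nat.mul_modEq_sub_mul_sub {r s x : ℕ} (hx : x ≤ s) (hrx : r * (s - x) ≤ s) :
    r * x ≡ s - r * (s - x) [MOD s] := by
  refine Nat.ModEq.add_right_cancel' (r * (s - x)) ?_
  rw [← Nat.mul_add, Nat.add_sub_cancel' hx, Nat.sub_add_cancel hrx]
  simp [Nat.ModEq]

theorem Nat.lt_sub_mul_of_lt_div {r s k : ℕ} (hk : k < s / r) (hdvd : ¬ r ∣ s) :
    r < s - r * k := by
  have hle : r * (k + 1) ≤ r * (s / r) := Nat.mul_le_mul_left r hk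
  have hlt : r * (s / r) < s := Nat.mul_div_lt_iff_not_dvd.2 hdvd
  rw [Nat.mul_add_one] at hle
  omega

section PermIcc

variable {s : ℕ} {f : Equiv.Perm ℕ} (hf : ∀ i ∈ Icc 1 s, f i ∈ Icc 1 s)
include hf

theorem Equiv.Perm.image_Icc_eq_of_mapsTo : (Icc 1 s).image f = Icc 1 s :=
  eq_of_subset_of_card_le (image_subset_iff.2 hf)
    (card_image_of_injective _ f.injective).ge

theorem Equiv.Perm.inv_mem_Icc_of_mapsTo {j : ℕ} (hj : j ∈ Icc 1 s) : f⁻¹ j ∈ Icc 1 s := by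
  rw [← Equiv.Perm.image_Icc_eq_of_mapsTo hf, mem_image] at hj
  obtain ⟨x, hx, rfl⟩ := hj
  simpa using hx

theorem Equiv.Perm.card_filter_inv_le_of_mapsTo {i : ℕ} (hi : i ≤ s) :
    #{j ∈ Icc 1 s | f⁻¹ j ≤ i} = i := by
  have himage : {j ∈ Icc 1 s | f⁻¹ j ≤ i} = (Icc 1 i).image f := by
    ext j
    simp only [mem_filter, mem_image]
    constructor
    · rintro ⟨hj, hji⟩
      have := Equiv.Perm.inv_mem_Icc_of_mapsTo hf hj
      exact ⟨f⁻¹ j, by simp_all, by simp⟩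
    · rintro ⟨x, hx, rfl⟩
      have hxs : x ∈ Icc 1 s := by simp only [mem_Icc] at hx ⊢; omega
      exact ⟨hf x hxs, by simp_all⟩
  rw [himage, card_image_of_injective _ f.injective, Nat.card_Icc]
  omega

theorem Equiv.Perm.add_card_filter_inv_le_of_mapsTo {r i : ℕ} (hi : i ≤ s)
    (hsmall : ∀ j ∈ Icc 1 r, f⁻¹ j ≤ i) (hrs : r ≤ s) :
    r + #{j ∈ Icc (r + 1) s | f⁻¹ j ≤ i} = i := by
  have hsub : Icc 1 r ⊆ {j ∈ Icc 1 s | f⁻¹ j ≤ i} := fun j hj ↦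
    mem_filter.2 ⟨Icc_subset_Icc_right hrs hj, hsmall j hj⟩
  have hsdiff : {j ∈ Icc 1 s | f⁻¹ j ≤ i} \ Icc 1 r = {j ∈ Icc (r + 1) s | f⁻¹ j ≤ i} := by
    ext j
    simp only [mem_sdiff, mem_filter, mem_Icc]
    omega
  have := card_sdiff_add_card_eq_card hsub
  rw [hsdiff, Equiv.Perm.card_filter_inv_le_of_mapsTo hf hi, Nat.card_Icc] at this
  omega

end PermIcc

section MulPerm

variable {r s : ℕ} {π₃ : Equiv.Perm ℕ}
  (hπ₃ : ∀ i : ℕ, 1 ≤ i → i ≤ s → 1 ≤ π₃ i ∧ π₃ i ≤ s ∧ π₃ i % s = (r * i) % s)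
include hπ₃

theorem mapsTo_Icc_of_mul_perm : ∀ i ∈ Icc 1 s, π₃ i ∈ Icc 1 s := fun i hi ↦ by
  rw [mem_Icc] at hi ⊢
  exact ⟨(hπ₃ i hi.1 hi.2).1, (hπ₃ i hi.1 hi.2).2.1⟩

theorem mul_perm_apply_of_div_lt (hdvd : ¬ r ∣ s) {x : ℕ} (hx : s - s / r < x) (hxs : x ≤ s) :
    π₃ x = s - r * (s - x) ∧ r < s - r * (s - x) := by
  have hlt : r < s - r * (s - x) := Nat.lt_sub_mul_of_lt_div (by omega) hdvd
  obtain ⟨h1, h2, hmod⟩ := hπ₃ x (by omega) hxs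
  refine ⟨Nat.eq_of_modEq_of_mem_Icc ?_ (mem_Icc.2 ⟨h1, h2⟩) (mem_Icc.2 ⟨by omega, by omega⟩), hlt⟩
  exact hmod.trans (Nat.mul_modEq_sub_mul_sub hxs (by omega))

theorem mul_perm_inv_le_sub_div (hdvd : ¬ r ∣ s) (hrs : r ≤ s) {j : ℕ} (hj : j ∈ Icc 1 r) :
    π₃⁻¹ j ≤ s - s / r := by
  have hj' : j ∈ Icc 1 s := Icc_subset_Icc_right hrs hj
  have hx : π₃ (π₃⁻¹ j) = j := π₃.apply_symm_apply j
  have hxs := (mem_Icc.1 (Equiv.Perm.inv_mem_Icc_of_mapsTo (mapsTo_Icc_of_mul_perm hπ₃) hj')).2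
  by_contra! hlt
  have := mul_perm_apply_of_div_lt hπ₃ hdvd hlt hxs
  rw [hx] at this
  have := (mem_Icc.1 hj).2
  omega

end MulPerm

theorem stmt_17_general
    (r s : ℕ) (hr : 1 < r) (hco : Nat.Coprime r s)
    (π₃ : Equiv.Perm ℕ)
    (hπ₃₁ : ∀ i : ℕ, 1 ≤ i → i ≤ s → 1 ≤ π₃ i ∧ π₃ i ≤ s ∧ π₃ i % s = (r * i) % s)
    (π₅ : Equiv.Perm ℕ)
    (hπ₅₂ : ∀ i : ℕ, r + 1 ≤ i → i ≤ s →
      π₅⁻¹ i = r + ((Finset.Icc (r + 1) s).filter (fun j => π₃⁻¹ j ≤ π₃⁻¹ i)).card) :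
    ∀ i : ℕ, s - s / r + 1 ≤ i → i ≤ s → π₅⁻¹ (s - r * (s - i)) = i := by
  intro i hi his
  have hdvd : ¬ r ∣ s := fun h ↦ hr.ne' (hco.eq_one_of_dvd h)
  obtain ⟨happly, hlt⟩ := mul_perm_apply_of_div_lt hπ₃₁ hdvd (by omega) his
  have hrs : r ≤ s := by omega
  rw [hπ₅₂ _ hlt (Nat.sub_le _ _), Equiv.Perm.inv_eq_iff_eq.2 happly.symm]
  refine Equiv.Perm.add_card_filter_inv_le_of_mapsTo (mapsTo_Icc_of_mul_perm hπ₃₁) his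
    (fun j hj ↦ ?_) hrs
  have := mul_perm_inv_le_sub_div hπ₃₁ hdvd hrs hj
  omega

theorem stmt_17
    (r s : ℕ) (hr : 1 < r) (hrs : r < s) (hco : Nat.Coprime r s)
    (π₃ : Equiv.Perm ℕ)
    (hπ₃₁ : ∀ i : ℕ, 1 ≤ i → i ≤ s → 1 ≤ π₃ i ∧ π₃ i ≤ s ∧ π₃ i % s = (r * i) % s)
    (hπ₃₂ : ∀ i : ℕ, i = 0 ∨ s < i → π₃ i = i)
    (π₅ : Equiv.Perm ℕ)
    (hπ₅₁ : ∀ i : ℕ, 1 ≤ i → i ≤ r → π₅⁻¹ i = i)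
    (hπ₅₂ : ∀ i : ℕ, r + 1 ≤ i → i ≤ s →
      π₅⁻¹ i = r + ((Finset.Icc (r + 1) s).filter (fun j => π₃⁻¹ j ≤ π₃⁻¹ i)).card)
    (hπ₅₃ : ∀ i : ℕ, i = 0 ∨ s < i → π₅ i = i) :
    ∀ i : ℕ, s - s / r + 1 ≤ i → i ≤ s → π₅⁻¹ (s - r * (s - i)) = i :=
  stmt_17_general r s hr hco π₃ hπ₃₁ π₅ hπ₅₂
end
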